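/- arXiv:2011.13258 — 6 statements merged into one kernel-verified Lean document; each statement's English description precedes it below -/
import Mathlib

section
/- Let α, β, γ be real numbers with γ ≠ 0. The quartic G(z) = 3γz⁴ − 2βz³ + αz² + 1 is hyperbolic (all four of its complex roots, counted with multiplicity, are real) if and only if α < 0, −α²/36 ≤ γ ≤ α²/12 and E(α,β,γ) ≥ 0. -/
set_option linter.unreachableTactic false
set_option linter.unusedTactic false
set_option maxHeartbeats 1000000 in
/-- The quartic `G(z) = 3γz⁴ − 2βz³ + αz² + 1` (γ ≠ 0) is hyperbolic (all its complex
roots are real) iff `α < 0`, `−α²/36 ≤ γ ≤ α²/12` and `E(α,β,γ) ≥ 0`. -/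
theorem quartic_G_hyperbolic_iff (α β γ : ℝ) (hγ : γ ≠ 0) :
    (∀ z : ℂ, 3 * (γ : ℂ) * z ^ 4 - 2 * (β : ℂ) * z ^ 3 + (α : ℂ) * z ^ 2 + 1 = 0 →
      z.im = 0) ↔
    (α < 0 ∧ -α ^ 2 / 36 ≤ γ ∧ γ ≤ α ^ 2 / 12 ∧
      0 ≤ 3 * α ^ 4 * γ - α ^ 3 * β ^ 2 - 72 * α ^ 2 * γ ^ 2
          + 108 * α * β ^ 2 * γ - 27 * β ^ 4 + 432 * γ ^ 3) := by
  constructor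
  · -- Forward direction
    intro h
    obtain ⟨a1, a2, a3, a4, hid⟩ : ∃ a1 a2 a3 a4 : ℝ, ∀ x : ℝ,
        x^4 + α*x^2 - 2*β*x + 3*γ = (x-a1)*(x-a2)*(x-a3)*(x-a4) := by
      open Polynomial in
      set P : Polynomial ℂ := X^4 + (C (α:ℂ) * X^2 + C (-2*(β:ℂ)) * X + C (3*(γ:ℂ))) with hPdef
      have hmonic : P.Monic := by
        unfold P
        monicity!
      have hdeg : P.natDegree = 4 := by
        unfold P
        compute_degree!
      have hsplits : Splits P := IsAlgClosed.splits P
      have hcard : Multiset.card P.roots = 4 := by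
        rw [splits_iff_card_roots.mp hsplits, hdeg]
      obtain ⟨w1, hw1m⟩ := Multiset.card_pos_iff_exists_mem.mp (by rw [hcard]; norm_num)
      obtain ⟨t1, ht1⟩ := Multiset.exists_cons_of_mem hw1m
      have hc1 : Multiset.card t1 = 3 := by
        have := hcard
        rw [ht1, Multiset.card_cons] at this
        omega
      obtain ⟨w2, w3, w4, ht234⟩ := Multiset.card_eq_three.mp hc1
      have hroots : P.roots = {w1, w2, w3, w4} := by rw [ht1, ht234]; rfl
      have hP : P = (X - C w1) * ((X - C w2) * ((X - C w3) * (X - C w4))) := by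
        have h0 := hsplits.eq_prod_roots_of_monic hmonic
        rw [hroots] at h0
        simpa [Multiset.map_cons, Multiset.prod_cons] using h0
      have heval : ∀ x : ℂ, x^4 + (α:ℂ)*x^2 - 2*(β:ℂ)*x + 3*(γ:ℂ)
          = (x-w1)*(x-w2)*(x-w3)*(x-w4) := by
        intro x
        have h0 := congrArg (Polynomial.eval x) hP
        simp only [hPdef, eval_add, eval_mul, eval_pow, eval_X, eval_C, eval_sub] at h0
        linear_combination h0
      have hreal : ∀ v : ℂ, v^4 + (α:ℂ)*v^2 - 2*(β:ℂ)*v + 3*(γ:ℂ) = 0 → v.im = 0 := by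
        intro v hv
        have hv0 : v ≠ 0 := by
          rintro rfl
          simp only [ne_eq, zero_pow, mul_zero, add_zero, zero_add, sub_zero] at hv
          norm_num at hv
          exact hγ (by exact_mod_cast hv)
        have hG : 3*(γ:ℂ)*(v⁻¹)^4 - 2*(β:ℂ)*(v⁻¹)^3 + (α:ℂ)*(v⁻¹)^2 + 1 = 0 := by
          have h4 : v^4 ≠ 0 := pow_ne_zero _ hv0
          field_simp
          first
          | linear_combination hv
          | linear_combination (v^5 - 1) * hv
          | linear_combination (1 - v^5) * hv
          | linear_combination - hv
          | linear_combination v^4 * hv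
          | linear_combination v^5 * hv
          | linear_combination v * hv
          | linear_combination (v-1) * hv
          | linear_combination (v^5+v^4) * hv
          | linear_combination v^3 * hv
          | linear_combination v^2 * hv
        have him := h _ hG
        rw [Complex.inv_im] at him
        have hns : Complex.normSq v ≠ 0 := (Complex.normSq_pos.mpr hv0).ne'
        have := (div_eq_zero_iff.mp him).resolve_right hns
        linarith [neg_eq_zero.mp this]
      have hw1r : w1 ∈ P.roots := by rw [hroots]; simp
      have hw2r : w2 ∈ P.roots := by rw [hroots]; simp
      have hw3r : w3 ∈ P.roots := by rw [hroots]; simp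
      have hw4r : w4 ∈ P.roots := by rw [hroots]; simp
      have hre : ∀ w : ℂ, w ∈ P.roots → w = ((w.re : ℝ) : ℂ) := by
        intro w hw
        have hz := (mem_roots (hmonic.ne_zero)).mp hw
        have : w^4 + (α:ℂ)*w^2 - 2*(β:ℂ)*w + 3*(γ:ℂ) = 0 := by
          have := hz
          simp only [IsRoot, hPdef, eval_add, eval_mul, eval_pow, eval_X, eval_C] at this
          linear_combination this
        have him := hreal w this
        symm
        apply Complex.ext
        · simp
        · simp [him]
      refine ⟨w1.re, w2.re, w3.re, w4.re, fun x => ?_⟩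
      have h0 := heval x
      rw [hre w1 hw1r, hre w2 hw2r, hre w3 hw3r, hre w4 hw4r] at h0
      exact_mod_cast h0
    -- extract symmetric function identities
    have e0 := hid 0
    have ep1 := hid 1
    have em1 := hid (-1)
    have ep2 := hid 2
    have em2 := hid (-2)
    have he1 : a1 + a2 + a3 + a4 = 0 := by
      linear_combination (1/12)*ep2 - (1/12)*em2 - (1/6)*ep1 + (1/6)*em1
    have he2 : a1*a2 + a1*a3 + a1*a4 + a2*a3 + a2*a4 + a3*a4 = α := by
      linear_combination (-1/2)*ep1 - (1/2)*em1 + e0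
    have he3 : a1*a2*a3 + a1*a2*a4 + a1*a3*a4 + a2*a3*a4 = 2*β := by
      linear_combination (2/3)*ep1 - (2/3)*em1 - (1/12)*ep2 + (1/12)*em2
    have he4 : a1*a2*a3*a4 = 3*γ := by
      linear_combination -e0
    have ha4 : a4 = -(a1 + a2 + a3) := by linarith
    subst ha4
    have hA : α = a1*a2 + a1*a3 + a1*(-(a1+a2+a3)) + a2*a3 + a2*(-(a1+a2+a3)) + a3*(-(a1+a2+a3)) :=
      he2.symm
    have hB : β = (a1*a2*a3 + a1*a2*(-(a1+a2+a3)) + a1*a3*(-(a1+a2+a3)) + a2*a3*(-(a1+a2+a3)))/2 := by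
      linarith
    have hG : γ = (a1*a2*a3*(-(a1+a2+a3)))/3 := by linarith
    subst hA
    subst hB
    subst hG
    have h3γ : a1*a2*a3*(-(a1+a2+a3)) ≠ 0 := by
      intro h0
      apply hγ
      rw [h0]
      norm_num
    have ha1 : a1 ≠ 0 := by
      rintro rfl
      simp at h3γ
    have ha1sq : 0 < a1^2 := by
      rcases ha1.lt_or_gt with h' | h' <;> nlinarith
    refine ⟨?_, ?_, ?_, ?_⟩
    · nlinarith [ha1sq, sq_nonneg a2, sq_nonneg a3, sq_nonneg (a1+a2+a3)]
    · nlinarith [sq_nonneg ((a1+a2)^2 - (a1+a3)^2), sq_nonneg ((a1+a2)^2 - (a2+a3)^2),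
        sq_nonneg ((a1+a3)^2 - (a2+a3)^2)]
    · nlinarith [sq_nonneg (a1^2 + a2^2 - a3^2 - (a1+a2+a3)^2),
        sq_nonneg (a1*a3 - a2*(-(a1+a2+a3))), sq_nonneg (a1*(-(a1+a2+a3)) - a2*a3)]
    · nlinarith [sq_nonneg ((a1-a2)*(a1-a3)*(a1-(-(a1+a2+a3)))*(a2-a3)*(a2-(-(a1+a2+a3)))*(a3-(-(a1+a2+a3))))]
  · -- Reverse direction
    rintro ⟨hα, hγlo, hγhi, hE⟩ z hz
    by_contra him
    have hz0 : z ≠ 0 := by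
      rintro rfl
      norm_num at hz
    have hbne : (z⁻¹).im ≠ 0 := by
      rw [Complex.inv_im]
      simp only [ne_eq, div_eq_zero_iff, neg_eq_zero, not_or]
      exact ⟨him, (Complex.normSq_pos.mpr hz0).ne'⟩
    have hQ : (z⁻¹)^4 + (α:ℂ)*(z⁻¹)^2 - 2*(β:ℂ)*(z⁻¹) + 3*(γ:ℂ) = 0 := by
      have h4 : z^4 ≠ 0 := pow_ne_zero _ hz0
      field_simp
      first
      | linear_combination hz
      | linear_combination (z^5 - 1) * hz
      | linear_combination (1 - z^5) * hz
      | linear_combination - hz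
      | linear_combination z^4 * hz
      | linear_combination z^5 * hz
      | linear_combination z * hz
      | linear_combination (z-1) * hz
      | linear_combination (z^5+z^4) * hz
      | linear_combination z^3 * hz
      | linear_combination z^2 * hz
    obtain ⟨a, b, hw⟩ : ∃ x y : ℝ, z⁻¹ = (x:ℂ) + (y:ℂ)*Complex.I :=
      ⟨(z⁻¹).re, (z⁻¹).im, (Complex.re_add_im _).symm⟩
    have hb : b ≠ 0 := by
      intro h0
      apply hbne
      rw [hw, h0]
      simp
    rw [hw] at hQ
    have h1 := congrArg Complex.re hQ
    have h2 := congrArg Complex.im hQ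
    simp only [Complex.add_re, Complex.add_im, Complex.sub_re, Complex.sub_im,
      Complex.mul_re, Complex.mul_im, Complex.ofReal_re, Complex.ofReal_im,
      Complex.I_re, Complex.I_im, Complex.zero_re, Complex.zero_im,
      Complex.one_re, Complex.one_im, pow_succ, pow_zero, one_mul,
      Complex.re_ofNat, Complex.im_ofNat] at h1 h2
    ring_nf at h1 h2
    -- h1 : real part equation, h2 : imaginary part equation
    have hβval : β = 2*a^3 - 2*a*b^2 + α*a := by
      have hfac : b * (2*(2*a^3 - 2*a*b^2 + α*a - β)) = 0 := by linear_combination h2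
      rcases mul_eq_zero.mp hfac with h' | h'
      · exact absurd h' hb
      · linarith
    have hγval : γ = (3*a^4 + 2*a^2*b^2 - b^4 + α*a^2 + α*b^2)/3 := by
      linear_combination (1/3)*h1 + (2*a/3)*hβval
    subst hβval
    subst hγval
    have hb2 : 0 < b^2 := by
      rcases hb.lt_or_gt with h' | h' <;> nlinarith
    have hEid : 3 * α ^ 4 * ((3*a^4 + 2*a^2*b^2 - b^4 + α*a^2 + α*b^2)/3)
        - α ^ 3 * (2*a^3 - 2*a*b^2 + α*a) ^ 2
        - 72 * α ^ 2 * ((3*a^4 + 2*a^2*b^2 - b^4 + α*a^2 + α*b^2)/3) ^ 2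
        + 108 * α * (2*a^3 - 2*a*b^2 + α*a) ^ 2 * ((3*a^4 + 2*a^2*b^2 - b^4 + α*a^2 + α*b^2)/3)
        - 27 * (2*a^3 - 2*a*b^2 + α*a) ^ 4
        + 432 * ((3*a^4 + 2*a^2*b^2 - b^4 + α*a^2 + α*b^2)/3) ^ 3
        = b^2 * (α + 2*a^2 - b^2) * ((α + 6*a^2 - 2*b^2)^2 + 16*a^2*b^2)^2 := by
      ring
    rw [hEid] at hE
    clear hEid hz hQ h1 h2 hw hγ hγlo hbne him hz0
    rcases lt_trichotomy (α + 2*a^2 - b^2) 0 with hn | hn | hn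
    · -- E < 0 : contradiction with hE
      have hS : 0 < (α + 6*a^2 - 2*b^2)^2 + 16*a^2*b^2 := by
        rcases eq_or_ne a 0 with rfl | ha
        · have hlt : α + 6*(0:ℝ)^2 - 2*b^2 < 0 := by nlinarith
          nlinarith
        · have ha2 : 0 < a^2 := by rcases ha.lt_or_gt with h' | h' <;> nlinarith
          nlinarith [sq_nonneg (α + 6*a^2 - 2*b^2)]
      have : b^2 * (α + 2*a^2 - b^2) * ((α + 6*a^2 - 2*b^2)^2 + 16*a^2*b^2)^2 < 0 :=
        mul_neg_of_neg_of_pos (mul_neg_of_pos_of_neg hb2 hn) (pow_pos hS 2)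
      linarith
    · -- boundary case n = a²
      have h2a : b^2 < 2*a^2 := by linarith
      nlinarith [mul_pos hb2 hb2, mul_pos hb2 (show (0:ℝ) < 2*a^2 - b^2 by linarith),
        sq_nonneg a, hγhi]
    · -- both quadratic factors have negative discriminant
      have hApos : 0 < α + 2*a^2 := by linarith
      have h6 : 0 < 6*a^2 - α := by nlinarith [sq_nonneg a]
      nlinarith [mul_pos hb2 hn, mul_pos hApos h6, hγhi]
end

section
/- Let a, b, c be real numbers with a ≠ 0 and let Q(z) = az⁴ + bz³ + cz² + 1. If all four complex roots of Q (counted with multiplicity) are real, then Q has two roots of opposite signs, i.e., there exist real roots r and s of Q with r·s < 0. -/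
open Polynomial

/-- Lemma: if the real quartic `Q(z) = az⁴ + bz³ + cz² + 1` (a ≠ 0) is hyperbolic
(all its complex roots are real), then `Q` has two real roots of opposite signs. -/
theorem quartic_hyperbolic_has_roots_of_opposite_signs (a b c : ℝ) (ha : a ≠ 0)
    (hyp : ∀ z : ℂ, (a : ℂ) * z ^ 4 + (b : ℂ) * z ^ 3 + (c : ℂ) * z ^ 2 + 1 = 0 →
      z.im = 0) :
    ∃ r s : ℝ, a * r ^ 4 + b * r ^ 3 + c * r ^ 2 + 1 = 0 ∧
      a * s ^ 4 + b * s ^ 3 + c * s ^ 2 + 1 = 0 ∧ r * s < 0 := by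
  set P : ℂ[X] := C (a:ℂ) * X^4 + C (b:ℂ) * X^3 + C (c:ℂ) * X^2 + 1 with hP
  have haC : (a:ℂ) ≠ 0 := by exact_mod_cast ha
  have hdeg : P.natDegree = 4 := by
    rw [hP]; compute_degree!
  have hP0 : P ≠ 0 := fun h => by simp [h] at hdeg
  have hsplit : Splits P := IsAlgClosed.splits P
  have hcard : P.roots.card = 4 := by
    rw [splits_iff_card_roots.mp hsplit, hdeg]
  have hlead : P.leadingCoeff = (a:ℂ) := by
    rw [leadingCoeff, hdeg, hP]
    simp [coeff_one]
  have hfac := hsplit.eq_prod_roots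
  rw [hlead] at hfac
  obtain ⟨z1, t1, ht1⟩ : ∃ z t, P.roots = z ::ₘ t := by
    rcases Multiset.card_pos_iff_exists_mem.mp (by rw [hcard]; norm_num) with ⟨z, hz⟩
    exact ⟨z, Multiset.exists_cons_of_mem hz⟩
  have hc1 : t1.card = 3 := by
    have := hcard; rw [ht1, Multiset.card_cons] at this; omega
  obtain ⟨z2, z3, z4, rfl⟩ := Multiset.card_eq_three.mp hc1
  rw [ht1] at hfac
  simp only [Multiset.insert_eq_cons, Multiset.map_cons, Multiset.prod_cons,
    Multiset.map_singleton, Multiset.prod_singleton] at hfac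
  -- each z i is real
  have hreal : ∀ z ∈ P.roots, z = ((z.re : ℝ) : ℂ) := by
    intro z hz
    have h0 := isRoot_of_mem_roots hz
    rw [hP] at h0
    simp only [IsRoot, eval_add, eval_mul, eval_pow, eval_C, eval_X, eval_one] at h0
    have := hyp z h0
    exact Complex.ext (by simp) (by simp [this])
  have m1 : z1 ∈ P.roots := by rw [ht1]; simp
  have m2 : z2 ∈ P.roots := by rw [ht1]; simp
  have m3 : z3 ∈ P.roots := by rw [ht1]; simp
  have m4 : z4 ∈ P.roots := by rw [ht1]; simp
  rw [hreal z1 m1, hreal z2 m2, hreal z3 m3, hreal z4 m4] at hfac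
  set r1 := z1.re; set r2 := z2.re; set r3 := z3.re; set r4 := z4.re
  have e0 := congrArg (eval 0) hfac
  rw [hP] at e0
  simp only [eval_add, eval_mul, eval_pow, eval_C, eval_X, eval_one, eval_sub] at e0
  have e1 := congrArg (fun p => eval 0 (derivative p)) hfac
  rw [hP] at e1
  simp only [derivative_add, derivative_mul, derivative_C, derivative_X_pow, derivative_X,
    derivative_one, derivative_sub, eval_add, eval_mul, eval_pow, eval_C, eval_X, eval_one,
    eval_sub, eval_natCast] at e1
  norm_num at e0 e1
  ring_nf at e0 e1
  rcases e1 with h | e1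
  · exact absurd (by exact_mod_cast h) ha
  have e0r : (1:ℝ) = a * r1 * r2 * r3 * r4 := by exact_mod_cast e0
  have e1r : -(r1 * r2 * r3) - r1 * r2 * r4 + (-(r1 * r3 * r4) - r2 * r3 * r4) = 0 := by
    have e1' : -(r1 * r2 * r3) - r1 * r2 * r4 - r1 * r3 * r4 - r2 * r3 * r4 = 0 := by exact_mod_cast e1
    linarith
  have hroot : ∀ z ∈ P.roots, a * z.re ^ 4 + b * z.re ^ 3 + c * z.re ^ 2 + 1 = 0 := by
    intro z hz
    have h0 := isRoot_of_mem_roots hz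
    rw [hP] at h0
    simp only [IsRoot, eval_add, eval_mul, eval_pow, eval_C, eval_X, eval_one] at h0
    rw [hreal z hz] at h0
    exact_mod_cast h0
  have root1 := hroot z1 m1
  have root2 := hroot z2 m2
  have root3 := hroot z3 m3
  have root4 := hroot z4 m4
  by_contra hcon
  push_neg at hcon
  have h1 : r1 ≠ 0 := by intro h; rw [h] at e0r; norm_num at e0r
  have h2 : r2 ≠ 0 := by intro h; rw [h] at e0r; norm_num at e0r
  have h3 : r3 ≠ 0 := by intro h; rw [h] at e0r; norm_num at e0r
  have h4 : r4 ≠ 0 := by intro h; rw [h] at e0r; norm_num at e0r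
  have h12 : 0 < r1 * r2 :=
    lt_of_le_of_ne (hcon r1 r2 root1 root2) (Ne.symm (mul_ne_zero h1 h2))
  have h13 : 0 < r1 * r3 :=
    lt_of_le_of_ne (hcon r1 r3 root1 root3) (Ne.symm (mul_ne_zero h1 h3))
  have h23 : 0 < r2 * r3 :=
    lt_of_le_of_ne (hcon r2 r3 root2 root3) (Ne.symm (mul_ne_zero h2 h3))
  have h34 : 0 < r3 * r4 :=
    lt_of_le_of_ne (hcon r3 r4 root3 root4) (Ne.symm (mul_ne_zero h3 h4))
  have hr4sq : 0 < r4 ^ 2 := by positivity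
  have he : (r1*r2)*(r3*r4) + (r1*r2)*r4^2 + (r1*r3)*r4^2 + (r2*r3)*r4^2 = 0 := by
    linear_combination (-r4) * e1r
  nlinarith [mul_pos h12 h34, mul_pos h12 hr4sq, mul_pos h13 hr4sq, mul_pos h23 hr4sq]
end

section
/- Let α, β, γ be real numbers with γ ≠ 0. The real algebraic curve S(x,y) = 0 has a singular point, i.e., there exists p = (x*, y*) ∈ ℝ² with S(p) = ∂S/∂x(p) = ∂S/∂y(p) = 0, if and only if either (i) 3β² − 8αγ ≤ 0 and 16γ²(α² + 4γ) − 8αβ²γ + β⁴ = 0, or (ii) 3β² − 8αγ ≥ 0 and E(α,β,γ) = 0. (Here 16γ²(α² + 4γ) − 8αβ²γ + β⁴ = 64γ³ + (4αγ − β²)².) -/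
private lemma cancel_ne {c t : ℝ} (hc : c ≠ 0) (h : c * t = 0) : t = 0 :=
  (mul_eq_zero.mp h).resolve_left hc

private lemma deriv_quartic (c0 c1 c2 c3 c4 x : ℝ) :
    deriv (fun t : ℝ => c0 + c1 * t + c2 * t ^ 2 + c3 * t ^ 3 + c4 * t ^ 4) x
      = c1 + 2 * c2 * x + 3 * c3 * x ^ 2 + 4 * c4 * x ^ 3 := by
  have h : HasDerivAt (fun t : ℝ => c0 + c1 * t + c2 * t ^ 2 + c3 * t ^ 3 + c4 * t ^ 4)
      (0 + c1 * 1 + c2 * (((2 : ℕ) : ℝ) * x ^ 1) + c3 * (((3 : ℕ) : ℝ) * x ^ 2)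
        + c4 * (((4 : ℕ) : ℝ) * x ^ 3)) x :=
    ((((hasDerivAt_const x c0).add ((hasDerivAt_id x).const_mul c1)).add
      ((hasDerivAt_pow 2 x).const_mul c2)).add ((hasDerivAt_pow 3 x).const_mul c3)).add
      ((hasDerivAt_pow 4 x).const_mul c4)
  rw [h.deriv]; push_cast; ring

private lemma key_lemma (α β γ : ℝ) (hγ : γ ≠ 0) :
    (∃ x y : ℝ,
      1 + α * x ^ 2 - 2 * β * x ^ 3 + 3 * γ * x ^ 4 + α * y ^ 2
          - 2 * β * x * y ^ 2 + 2 * γ * x ^ 2 * y ^ 2 - γ * y ^ 4 = 0 ∧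
      2 * α * x - 6 * β * x ^ 2 + 12 * γ * x ^ 3 - 2 * β * y ^ 2 + 4 * γ * x * y ^ 2 = 0 ∧
      2 * α * y - 4 * β * x * y + 4 * γ * x ^ 2 * y - 4 * γ * y ^ 3 = 0) ↔
    ((3 * β ^ 2 - 8 * α * γ ≤ 0 ∧
        16 * γ ^ 2 * (α ^ 2 + 4 * γ) - 8 * α * β ^ 2 * γ + β ^ 4 = 0) ∨
      (0 ≤ 3 * β ^ 2 - 8 * α * γ ∧
        3 * α ^ 4 * γ - α ^ 3 * β ^ 2 - 72 * α ^ 2 * γ ^ 2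
          + 108 * α * β ^ 2 * γ - 27 * β ^ 4 + 432 * γ ^ 3 = 0)) := by
  constructor
  · rintro ⟨x, y, hS, hP, hQ⟩
    by_cases hy : y = 0
    · subst hy
      right
      have hx0 : x ≠ 0 := by
        rintro rfl; norm_num at hS
      have hq : 6 * γ * x ^ 2 - 3 * β * x + α = 0 := by
        have h2 : (2 * x) * (6 * γ * x ^ 2 - 3 * β * x + α) = 0 := by linear_combination hP
        exact (mul_eq_zero.mp h2).resolve_left (by
          intro h; exact hx0 (by linarith))
      set d : ℝ := 12 * γ * x - 3 * β with hdd
      have hd : d ^ 2 = 9 * β ^ 2 - 24 * α * γ := by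
        rw [hdd]; linear_combination 24 * γ * hq
      constructor
      · nlinarith [sq_nonneg d]
      · have hPi : ((3 : ℝ)*γ*d^4 + (20736 : ℝ)*γ^4 + (12 : ℝ)*β*γ*d^3 + (-54 : ℝ)*β^2*γ*d^2
            + (-324 : ℝ)*β^3*γ*d + (-405 : ℝ)*β^4*γ + (144 : ℝ)*α*γ^2*d^2
            + (864 : ℝ)*α*β*γ^2*d + (1296 : ℝ)*α*β^2*γ^2) = 0 := by
          rw [hdd]; linear_combination 20736 * γ ^ 4 * hS
        have hE5 : 995328 * γ ^ 5 * (3 * α ^ 4 * γ - α ^ 3 * β ^ 2 - 72 * α ^ 2 * γ ^ 2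
            + 108 * α * β ^ 2 * γ - 27 * β ^ 4 + 432 * γ ^ 3) = 0 := by
          linear_combination
            ((3 : ℝ)*γ*d^4 + (20736 : ℝ)*γ^4 + (-12 : ℝ)*β*γ*d^3 + (-54 : ℝ)*β^2*γ*d^2
              + (324 : ℝ)*β^3*γ*d + (-405 : ℝ)*β^4*γ + (144 : ℝ)*α*γ^2*d^2
              + (-864 : ℝ)*α*β*γ^2*d + (1296 : ℝ)*α*β^2*γ^2) * hPi
            - ((9 : ℝ)*γ^2*d^6 + (124416 : ℝ)*γ^5*d^2 + (-387 : ℝ)*β^2*γ^2*d^4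
              + (-1119744 : ℝ)*β^2*γ^5 + (4779 : ℝ)*β^4*γ^2*d^2 + (-18225 : ℝ)*β^6*γ^2
              + (648 : ℝ)*α*γ^3*d^4 + (2985984 : ℝ)*α*γ^6 + (-13392 : ℝ)*α*β^2*γ^3*d^2
              + (68040 : ℝ)*α*β^4*γ^3 + (5184 : ℝ)*α^2*γ^4*d^2 + (-5184 : ℝ)*α^2*β^2*γ^4
              + (-124416 : ℝ)*α^3*γ^5) * hd
        exact cancel_ne (mul_ne_zero (by norm_num) (pow_ne_zero 5 hγ)) hE5
    · have hA : α - 2 * β * x + 2 * γ * x ^ 2 - 2 * γ * y ^ 2 = 0 := by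
        have h2 : (2 * y) * (α - 2 * β * x + 2 * γ * x ^ 2 - 2 * γ * y ^ 2) = 0 := by
          linear_combination hQ
        exact (mul_eq_zero.mp h2).resolve_left (by
          intro h; exact hy (by linarith))
      have hfac : (4 * γ * x - β) * (4 * γ * x ^ 2 - 2 * β * x + α) = 0 := by
        linear_combination γ * hP + (2 * γ * x - β) * hA
      rcases mul_eq_zero.mp hfac with h1 | h1
      · left
        have h2e : 16 * γ ^ 2 * y ^ 2 = 8 * α * γ - 3 * β ^ 2 := by
          linear_combination (4 * γ * x - 3 * β) * h1 - 8 * γ * hA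
        constructor
        · have h0 : (0:ℝ) ≤ 16 * γ ^ 2 * y ^ 2 := by positivity
          linarith
        · linear_combination (64 : ℝ) * γ ^ 3 * hS
            - ((32 : ℝ)*γ^3*x*y^2 + (48 : ℝ)*γ^3*x^3 + (-24 : ℝ)*β*γ^2*y^2
              + (-20 : ℝ)*β*γ^2*x^2 + (-5 : ℝ)*β^2*γ*x + (-5/4 : ℝ)*β^3
              + (16 : ℝ)*α*γ^2*x + (4 : ℝ)*α*β*γ) * h1
            - ((-4 : ℝ)*γ^2*y^2 + (-3/4 : ℝ)*β^2 + (2 : ℝ)*α*γ) * h2e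
      · exfalso
        have h0 : γ * (x ^ 2 + y ^ 2) = 0 := by
          linear_combination (1/2 : ℝ) * h1 - (1/2 : ℝ) * hA
        have h00 : x ^ 2 + y ^ 2 = 0 := cancel_ne hγ h0
        have hy2 : y ^ 2 = 0 := by nlinarith [sq_nonneg x, sq_nonneg y]
        exact hy (pow_eq_zero_iff two_ne_zero |>.mp hy2)
  · rintro (⟨hle, hC⟩ | ⟨hge, hE⟩)
    · have key2 : ∀ X Y : ℝ, 4 * γ * X = β → 16 * γ ^ 2 * Y ^ 2 = 8 * α * γ - 3 * β ^ 2 →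
          (1 + α * X ^ 2 - 2 * β * X ^ 3 + 3 * γ * X ^ 4 + α * Y ^ 2
              - 2 * β * X * Y ^ 2 + 2 * γ * X ^ 2 * Y ^ 2 - γ * Y ^ 4 = 0 ∧
            2 * α * X - 6 * β * X ^ 2 + 12 * γ * X ^ 3 - 2 * β * Y ^ 2
              + 4 * γ * X * Y ^ 2 = 0 ∧
            2 * α * Y - 4 * β * X * Y + 4 * γ * X ^ 2 * Y - 4 * γ * Y ^ 3 = 0) := by
        intro X Y hx4 h2e
        refine ⟨?_, ?_, ?_⟩
        · refine cancel_ne (show (64 : ℝ) * γ ^ 3 ≠ 0 from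
            mul_ne_zero (by norm_num) (pow_ne_zero 3 hγ)) ?_
          linear_combination hC
            + ((32 : ℝ)*γ^3*X*Y^2 + (48 : ℝ)*γ^3*X^3 + (-24 : ℝ)*β*γ^2*Y^2
              + (-20 : ℝ)*β*γ^2*X^2 + (-5 : ℝ)*β^2*γ*X + (-5/4 : ℝ)*β^3
              + (16 : ℝ)*α*γ^2*X + (4 : ℝ)*α*β*γ) * hx4
            + ((-4 : ℝ)*γ^2*Y^2 + (-3/4 : ℝ)*β^2 + (2 : ℝ)*α*γ) * h2e
        · refine cancel_ne (show γ ^ 2 ≠ 0 from pow_ne_zero 2 hγ) ?_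
          linear_combination
            ((1 : ℝ)*γ^2*Y^2 + (3 : ℝ)*γ^2*X^2 + (-3/4 : ℝ)*β*γ*X + (-3/16 : ℝ)*β^2
              + (1/2 : ℝ)*α*γ) * hx4 + ((-1/16 : ℝ)*β) * h2e
        · refine cancel_ne (show (8 : ℝ) * γ ≠ 0 from mul_ne_zero (by norm_num) hγ) ?_
          linear_combination ((8 : ℝ)*γ*X*Y + (-6 : ℝ)*β*Y) * hx4 + ((-2 : ℝ)*Y) * h2e
      have hx4 : 4 * γ * (β / (4 * γ)) = β := by field_simp
      have h2e : 16 * γ ^ 2 * (Real.sqrt (8 * α * γ - 3 * β ^ 2) / (4 * γ)) ^ 2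
          = 8 * α * γ - 3 * β ^ 2 := by
        rw [div_pow, Real.sq_sqrt (by linarith)]
        field_simp
        ring
      exact ⟨_, _, key2 _ _ hx4 h2e⟩
    · have hD : (0:ℝ) ≤ 9 * β ^ 2 - 24 * α * γ := by linarith
      set d : ℝ := Real.sqrt (9 * β ^ 2 - 24 * α * γ) with hdd
      have hd : d ^ 2 = 9 * β ^ 2 - 24 * α * γ := Real.sq_sqrt hD
      have hprod : ((3 : ℝ)*γ*d^4 + (20736 : ℝ)*γ^4 + (12 : ℝ)*β*γ*d^3 + (-54 : ℝ)*β^2*γ*d^2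
            + (-324 : ℝ)*β^3*γ*d + (-405 : ℝ)*β^4*γ + (144 : ℝ)*α*γ^2*d^2
            + (864 : ℝ)*α*β*γ^2*d + (1296 : ℝ)*α*β^2*γ^2)
          * ((3 : ℝ)*γ*d^4 + (20736 : ℝ)*γ^4 + (-12 : ℝ)*β*γ*d^3 + (-54 : ℝ)*β^2*γ*d^2
            + (324 : ℝ)*β^3*γ*d + (-405 : ℝ)*β^4*γ + (144 : ℝ)*α*γ^2*d^2
            + (-864 : ℝ)*α*β*γ^2*d + (1296 : ℝ)*α*β^2*γ^2) = 0 := by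
        linear_combination 995328 * γ ^ 5 * hE
          + ((9 : ℝ)*γ^2*d^6 + (124416 : ℝ)*γ^5*d^2 + (-387 : ℝ)*β^2*γ^2*d^4
            + (-1119744 : ℝ)*β^2*γ^5 + (4779 : ℝ)*β^4*γ^2*d^2 + (-18225 : ℝ)*β^6*γ^2
            + (648 : ℝ)*α*γ^3*d^4 + (2985984 : ℝ)*α*γ^6 + (-13392 : ℝ)*α*β^2*γ^3*d^2
            + (68040 : ℝ)*α*β^4*γ^3 + (5184 : ℝ)*α^2*γ^4*d^2 + (-5184 : ℝ)*α^2*β^2*γ^4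
            + (-124416 : ℝ)*α^3*γ^5) * hd
      have c20736 : (20736 : ℝ) * γ ^ 4 ≠ 0 := mul_ne_zero (by norm_num) (pow_ne_zero 4 hγ)
      have c24 : (24 : ℝ) * γ ≠ 0 := mul_ne_zero (by norm_num) hγ
      rcases mul_eq_zero.mp hprod with hPi | hPi
      · refine ⟨(3 * β + d) / (12 * γ), 0, ?_, ?_, ?_⟩ <;>
        · have h12 : 12 * γ * ((3 * β + d) / (12 * γ)) = 3 * β + d := by field_simp
          set X : ℝ := (3 * β + d) / (12 * γ)
          have hp0 : 1 + α * X ^ 2 - 2 * β * X ^ 3 + 3 * γ * X ^ 4 = 0 := by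
            refine cancel_ne c20736 ?_
            linear_combination hPi
              + ((3 : ℝ)*γ*d^3 + (36 : ℝ)*γ^2*X*d^2 + (432 : ℝ)*γ^3*X^2*d
                + (5184 : ℝ)*γ^4*X^3 + (3 : ℝ)*β*γ*d^2 + (-72 : ℝ)*β*γ^2*X*d
                + (-2160 : ℝ)*β*γ^3*X^2 + (-63 : ℝ)*β^2*γ*d + (-540 : ℝ)*β^2*γ^2*X
                + (-135 : ℝ)*β^3*γ + (144 : ℝ)*α*γ^2*d + (1728 : ℝ)*α*γ^3*X
                + (432 : ℝ)*α*β*γ^2) * h12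
          have hq0 : 6 * γ * X ^ 2 - 3 * β * X + α = 0 := by
            refine cancel_ne c24 ?_
            linear_combination (12 * γ * X - 3 * β + d) * h12 + hd
          first
          | linear_combination hp0
          | linear_combination 2 * X * hq0
          | ring
      · refine ⟨(3 * β - d) / (12 * γ), 0, ?_, ?_, ?_⟩ <;>
        · have h12 : 12 * γ * ((3 * β - d) / (12 * γ)) = 3 * β - d := by field_simp
          set X : ℝ := (3 * β - d) / (12 * γ)
          have hp0 : 1 + α * X ^ 2 - 2 * β * X ^ 3 + 3 * γ * X ^ 4 = 0 := by
            refine cancel_ne c20736 ?_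
            linear_combination hPi
              + ((-3 : ℝ)*γ*d^3 + (36 : ℝ)*γ^2*X*d^2 + (-432 : ℝ)*γ^3*X^2*d
                + (5184 : ℝ)*γ^4*X^3 + (3 : ℝ)*β*γ*d^2 + (72 : ℝ)*β*γ^2*X*d
                + (-2160 : ℝ)*β*γ^3*X^2 + (63 : ℝ)*β^2*γ*d + (-540 : ℝ)*β^2*γ^2*X
                + (-135 : ℝ)*β^3*γ + (-144 : ℝ)*α*γ^2*d + (1728 : ℝ)*α*γ^3*X
                + (432 : ℝ)*α*β*γ^2) * h12
          have hq0 : 6 * γ * X ^ 2 - 3 * β * X + α = 0 := by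
            refine cancel_ne c24 ?_
            linear_combination (12 * γ * X - 3 * β - d) * h12 + hd
          first
          | linear_combination hp0
          | linear_combination 2 * X * hq0
          | ring

/-- Lemma: the real algebraic curve `S(x,y) = 0`, where
`S(x,y) = 1 + αx² − 2βx³ + 3γx⁴ + αy² − 2βxy² + 2γx²y² − γy⁴` (γ ≠ 0), has a singular
point (a point where `S` and both its partial derivatives vanish) iff either
(i) `3β² − 8αγ ≤ 0` and `16γ²(α² + 4γ) − 8αβ²γ + β⁴ = 0`, or
(ii) `3β² − 8αγ ≥ 0` and `E(α,β,γ) = 0`. -/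
theorem curve_S_has_singular_point_iff (α β γ : ℝ) (hγ : γ ≠ 0) :
    (∃ x y : ℝ,
      (fun x y : ℝ => 1 + α * x ^ 2 - 2 * β * x ^ 3 + 3 * γ * x ^ 4 + α * y ^ 2
          - 2 * β * x * y ^ 2 + 2 * γ * x ^ 2 * y ^ 2 - γ * y ^ 4) x y = 0 ∧
      deriv (fun t : ℝ => 1 + α * t ^ 2 - 2 * β * t ^ 3 + 3 * γ * t ^ 4 + α * y ^ 2
          - 2 * β * t * y ^ 2 + 2 * γ * t ^ 2 * y ^ 2 - γ * y ^ 4) x = 0 ∧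
      deriv (fun t : ℝ => 1 + α * x ^ 2 - 2 * β * x ^ 3 + 3 * γ * x ^ 4 + α * t ^ 2
          - 2 * β * x * t ^ 2 + 2 * γ * x ^ 2 * t ^ 2 - γ * t ^ 4) y = 0) ↔
    ((3 * β ^ 2 - 8 * α * γ ≤ 0 ∧
        16 * γ ^ 2 * (α ^ 2 + 4 * γ) - 8 * α * β ^ 2 * γ + β ^ 4 = 0) ∨
      (0 ≤ 3 * β ^ 2 - 8 * α * γ ∧
        3 * α ^ 4 * γ - α ^ 3 * β ^ 2 - 72 * α ^ 2 * γ ^ 2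
          + 108 * α * β ^ 2 * γ - 27 * β ^ 4 + 432 * γ ^ 3 = 0)) := by
  have h1 : ∀ x y : ℝ,
      deriv (fun t : ℝ => 1 + α * t ^ 2 - 2 * β * t ^ 3 + 3 * γ * t ^ 4 + α * y ^ 2
          - 2 * β * t * y ^ 2 + 2 * γ * t ^ 2 * y ^ 2 - γ * y ^ 4) x
        = 2 * α * x - 6 * β * x ^ 2 + 12 * γ * x ^ 3 - 2 * β * y ^ 2 + 4 * γ * x * y ^ 2 := by
    intro x y
    rw [show (fun t : ℝ => 1 + α * t ^ 2 - 2 * β * t ^ 3 + 3 * γ * t ^ 4 + α * y ^ 2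
          - 2 * β * t * y ^ 2 + 2 * γ * t ^ 2 * y ^ 2 - γ * y ^ 4)
        = (fun t : ℝ => (1 + α * y ^ 2 - γ * y ^ 4) + (-(2 * β * y ^ 2)) * t
            + (α + 2 * γ * y ^ 2) * t ^ 2 + (-(2 * β)) * t ^ 3 + (3 * γ) * t ^ 4) from
      funext fun t => by ring, deriv_quartic]
    ring
  have h2 : ∀ x y : ℝ,
      deriv (fun t : ℝ => 1 + α * x ^ 2 - 2 * β * x ^ 3 + 3 * γ * x ^ 4 + α * t ^ 2
          - 2 * β * x * t ^ 2 + 2 * γ * x ^ 2 * t ^ 2 - γ * t ^ 4) y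
        = 2 * α * y - 4 * β * x * y + 4 * γ * x ^ 2 * y - 4 * γ * y ^ 3 := by
    intro x y
    rw [show (fun t : ℝ => 1 + α * x ^ 2 - 2 * β * x ^ 3 + 3 * γ * x ^ 4 + α * t ^ 2
          - 2 * β * x * t ^ 2 + 2 * γ * x ^ 2 * t ^ 2 - γ * t ^ 4)
        = (fun t : ℝ => (1 + α * x ^ 2 - 2 * β * x ^ 3 + 3 * γ * x ^ 4) + (0 : ℝ) * t
            + (α - 2 * β * x + 2 * γ * x ^ 2) * t ^ 2 + (0 : ℝ) * t ^ 3 + (-γ) * t ^ 4) from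
      funext fun t => by ring, deriv_quartic]
    ring
  constructor
  · rintro ⟨x, y, hS, hP, hQ⟩
    rw [h1 x y] at hP
    rw [h2 x y] at hQ
    exact (key_lemma α β γ hγ).mp ⟨x, y, hS, hP, hQ⟩
  · intro h
    obtain ⟨x, y, hS, hP, hQ⟩ := (key_lemma α β γ hγ).mpr h
    exact ⟨x, y, hS, by rw [h1 x y]; exact hP, by rw [h2 x y]; exact hQ⟩
end

section
/- Let α, β, γ be real numbers with γ ≠ 0 and suppose (x*, y*) ∈ ℝ² with y* ≠ 0 satisfies S(x*,y*) = ∂S/∂x(x*,y*) = ∂S/∂y(x*,y*) = 0. Then x* = β/(4γ), (y*)² = (8αγ − 3β²)/(16γ²), and 64γ³ + (4αγ − β²)² = 0. -/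
/-- Lemma: any singular point `(x*, y*)` of the curve `S = 0` with `y* ≠ 0` satisfies
`x* = β/(4γ)`, `(y*)² = (8αγ − 3β²)/(16γ²)` and `64γ³ + (4αγ − β²)² = 0`. -/
theorem curve_S_nonreal_singular_point
    (α β γ : ℝ) (hγ : γ ≠ 0) (x y : ℝ) (hy : y ≠ 0)
    (hS : 1 + α * x ^ 2 - 2 * β * x ^ 3 + 3 * γ * x ^ 4 + α * y ^ 2
        - 2 * β * x * y ^ 2 + 2 * γ * x ^ 2 * y ^ 2 - γ * y ^ 4 = 0)
    (hSx : deriv (fun t : ℝ => 1 + α * t ^ 2 - 2 * β * t ^ 3 + 3 * γ * t ^ 4 + α * y ^ 2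
        - 2 * β * t * y ^ 2 + 2 * γ * t ^ 2 * y ^ 2 - γ * y ^ 4) x = 0)
    (hSy : deriv (fun t : ℝ => 1 + α * x ^ 2 - 2 * β * x ^ 3 + 3 * γ * x ^ 4 + α * t ^ 2
        - 2 * β * x * t ^ 2 + 2 * γ * x ^ 2 * t ^ 2 - γ * t ^ 4) y = 0) :
    x = β / (4 * γ) ∧ y ^ 2 = (8 * α * γ - 3 * β ^ 2) / (16 * γ ^ 2) ∧
      64 * γ ^ 3 + (4 * α * γ - β ^ 2) ^ 2 = 0 := by
  -- compute the x-derivative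
  have Hx : HasDerivAt (fun t : ℝ => 1 + α * t ^ 2 - 2 * β * t ^ 3 + 3 * γ * t ^ 4 + α * y ^ 2
        - 2 * β * t * y ^ 2 + 2 * γ * t ^ 2 * y ^ 2 - γ * y ^ 4)
      (2*α*x - 6*β*x^2 + 12*γ*x^3 - 2*β*y^2 + 4*γ*x*y^2) x := by
    have h2 : HasDerivAt (fun t : ℝ => t ^ 2) (2 * x) x := by simpa using hasDerivAt_pow 2 x
    have h3 : HasDerivAt (fun t : ℝ => t ^ 3) (3 * x ^ 2) x := by simpa using hasDerivAt_pow 3 x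
    have h4 : HasDerivAt (fun t : ℝ => t ^ 4) (4 * x ^ 3) x := by simpa using hasDerivAt_pow 4 x
    have h1 : HasDerivAt (fun t : ℝ => t) 1 x := hasDerivAt_id x
    have H := (((((((h2.const_mul α).const_add 1).sub (h3.const_mul (2*β))).add
        (h4.const_mul (3*γ))).add_const (α*y^2)).sub
        (h1.const_mul (2*β*y^2))).add (h2.const_mul (2*γ*y^2))).sub_const (γ*y^4)
    refine (H.congr_deriv (by ring)).congr_of_eventuallyEq (Filter.Eventually.of_forall fun t => ?_)
    simp only [Pi.add_apply, Pi.sub_apply]; ring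
  -- compute the y-derivative
  have Hy : HasDerivAt (fun t : ℝ => 1 + α * x ^ 2 - 2 * β * x ^ 3 + 3 * γ * x ^ 4 + α * t ^ 2
        - 2 * β * x * t ^ 2 + 2 * γ * x ^ 2 * t ^ 2 - γ * t ^ 4)
      (2*α*y - 4*β*x*y + 4*γ*x^2*y - 4*γ*y^3) y := by
    have h2 : HasDerivAt (fun t : ℝ => t ^ 2) (2 * y) y := by simpa using hasDerivAt_pow 2 y
    have h4 : HasDerivAt (fun t : ℝ => t ^ 4) (4 * y ^ 3) y := by simpa using hasDerivAt_pow 4 y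
    have H := ((((h2.const_mul α).const_add (1 + α * x ^ 2 - 2 * β * x ^ 3 + 3 * γ * x ^ 4)).sub
        (h2.const_mul (2*β*x))).add (h2.const_mul (2*γ*x^2))).sub (h4.const_mul γ)
    refine (H.congr_deriv (by ring)).congr_of_eventuallyEq (Filter.Eventually.of_forall fun t => ?_)
    simp only [Pi.add_apply, Pi.sub_apply]
  have hSx' : 2*α*x - 6*β*x^2 + 12*γ*x^3 - 2*β*y^2 + 4*γ*x*y^2 = 0 := by
    rw [Hx.deriv] at hSx; exact hSx
  have hSy' : 2*α*y - 4*β*x*y + 4*γ*x^2*y - 4*γ*y^3 = 0 := by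
    rw [Hy.deriv] at hSy; exact hSy
  -- divide hSy' by 2y
  have hfac : α - 2*β*x + 2*γ*x^2 - 2*γ*y^2 = 0 := by
    have h1 : (2*y) * (α - 2*β*x + 2*γ*x^2 - 2*γ*y^2) = 0 := by linear_combination hSy'
    rcases mul_eq_zero.mp h1 with h | h
    · exact absurd (by linarith : y = 0) hy
    · exact h
  -- factor the x-equation
  have hfactor : (4*γ*x - β) * (2*γ*y^2 + 2*γ*x^2) = 0 := by
    linear_combination γ*hSx' - 2*γ*x*hfac
  have hne : 2*γ*y^2 + 2*γ*x^2 ≠ 0 := by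
    have hpos : y^2 + x^2 > 0 := by positivity
    intro h
    apply hγ
    have h2 : 2*γ*(y^2 + x^2) = 0 := by linarith [h]
    rcases mul_eq_zero.mp h2 with h' | h'
    · linarith
    · linarith
  have hx4 : 4*γ*x - β = 0 := by
    rcases mul_eq_zero.mp hfactor with h | h
    · exact h
    · exact absurd h hne
  have hγ4 : (4:ℝ)*γ ≠ 0 := by
    intro h; exact hγ (by linarith)
  have hγ16 : (16:ℝ)*γ^2 ≠ 0 := by
    intro h
    exact hγ (pow_eq_zero_iff (n := 2) (by norm_num) |>.mp (by linarith))
  have hxv : x = β / (4*γ) := by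
    rw [eq_div_iff hγ4]; linarith
  have hyv : y^2 = (8*α*γ - 3*β^2) / (16*γ^2) := by
    rw [eq_div_iff hγ16]
    linear_combination (-8*γ)*hfac + (4*γ*x - 3*β)*hx4
  refine ⟨hxv, hyv, ?_⟩
  linear_combination 64*γ^3*hS
    + (-64*γ^3*y^2 + 32*γ^2*(α-2*β*x+2*γ*x^2) - 16*γ^2*(α-2*β*x+2*γ*x^2-2*γ*y^2))*hfac
    + (-64*γ^3*x^3 + 48*β*γ^2*x^2 - 32*α*γ^2*x - 4*β^2*γ*x + 8*α*β*γ - β^3)*hx4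
end

section
/- Let α be a real number and define polynomials by the three-term recurrence P_n(z) = z·P_{n-1}(z) + α·P_{n-2}(z) with P_0(z) = 1 and P_1(z) = z. Then all complex zeros of P_n are real for every positive integer n if and only if α ≤ 0. -/
open Polynomial

private lemma three_term_aux (α : ℝ) (hα : α ≤ 0) (P : ℕ → Polynomial ℝ)
    (h0 : P 0 = 1) (h1 : P 1 = X)
    (hrec : ∀ n, 2 ≤ n → P n = X * P (n - 1) + C α * P (n - 2))
    (z : ℂ) (hz : 0 < z.im) :
    ∀ n : ℕ, 0 < ((aeval z (P (n+1))) * (starRingEnd ℂ) (aeval z (P n))).im := by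
  intro n
  induction n with
  | zero =>
    simp [h0, h1, hz]
  | succ n ih =>
    have hrec' : P (n+2) = X * P (n+1) + C α * P n := by
      have := hrec (n+2) (by omega)
      simpa using this
    set a := aeval z (P n) with ha
    set b := aeval z (P (n+1)) with hb
    have hbne : b ≠ 0 := by
      intro h
      rw [h] at ih
      simp at ih
    have hb2 : 0 < Complex.normSq b := Complex.normSq_pos.2 hbne
    rw [Complex.normSq_apply] at hb2
    have hval : aeval z (P (n+2)) = z * b + (α : ℂ) * a := by
      simp [hrec', hb, ha, mul_comm]
    rw [hval]
    simp only [Complex.mul_im, Complex.mul_re, Complex.add_re, Complex.add_im,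
      Complex.conj_re, Complex.conj_im, Complex.ofReal_re, Complex.ofReal_im] at ih ⊢
    nlinarith [hz, hb2, ih, mul_nonneg (neg_nonneg.2 hα) (le_of_lt ih)]

/-- The polynomials of the three-term recurrence `P_n = z P_{n-1} + α P_{n-2}`,
`P_0 = 1`, `P_1 = z`, are all real-rooted iff `α ≤ 0`. -/
theorem three_term_recurrence_real_rooted_iff
    (α : ℝ) (P : ℕ → Polynomial ℝ)
    (h0 : P 0 = 1) (h1 : P 1 = X)
    (hrec : ∀ n, 2 ≤ n → P n = X * P (n - 1) + C α * P (n - 2)) :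
    (∀ n : ℕ, 0 < n → ∀ z : ℂ, aeval z (P n) = 0 → z.im = 0) ↔ α ≤ 0 := by
  constructor
  · intro h
    by_contra hα
    push_neg at hα
    set z : ℂ := Complex.I * (Real.sqrt α : ℝ) with hzdef
    have hP2 : P 2 = X * X + C α := by
      have := hrec 2 (by norm_num)
      simpa [h1, h0] using this
    have hroot : aeval z (P 2) = 0 := by
      rw [hP2]
      have hsq : (Real.sqrt α : ℂ) * (Real.sqrt α : ℂ) = (α : ℂ) := by
        rw [← Complex.ofReal_mul, Real.mul_self_sqrt hα.le]
      simp only [map_add, map_mul, aeval_X, aeval_C, hzdef]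
      have hII : Complex.I * (Real.sqrt α : ℂ) * (Complex.I * (Real.sqrt α : ℂ)) = -(α:ℂ) := by
        rw [show Complex.I * (Real.sqrt α : ℂ) * (Complex.I * (Real.sqrt α : ℂ))
            = Complex.I * Complex.I * ((Real.sqrt α : ℂ) * (Real.sqrt α : ℂ)) by ring,
          Complex.I_mul_I, hsq]
        ring
      rw [hII]
      simp
    have him := h 2 (by norm_num) z hroot
    have : z.im = Real.sqrt α := by simp [hzdef]
    rw [this] at him
    exact absurd him (ne_of_gt (Real.sqrt_pos.2 hα))
  · intro hα n hn z hz
    by_contra him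
    have key : ∀ w : ℂ, 0 < w.im → aeval w (P n) ≠ 0 := by
      intro w hw hzero
      obtain ⟨m, rfl⟩ : ∃ m, n = m + 1 := ⟨n - 1, by omega⟩
      have := three_term_aux α hα P h0 h1 hrec w hw m
      rw [hzero] at this
      simp at this
    rcases lt_trichotomy z.im 0 with hlt | heq | hgt
    · have hconj : aeval ((starRingEnd ℂ) z) (P n) = 0 := by
        rw [Polynomial.aeval_conj, hz, map_zero]
      exact key ((starRingEnd ℂ) z) (by simpa using neg_pos.2 hlt) hconj
    · exact him heq
    · exact key z hgt hz
end

section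
/- Let α, β, γ be real numbers with γ ≠ 0, let {P_n} be the associated five-term recurrence polynomial sequence, and for each positive integer n let T_n be the n×n real matrix with entries (T_n)_{ij} = −1 if j = i + 1, (T_n)_{ij} = α if i = j + 1, (T_n)_{ij} = −β if i = j + 2, (T_n)_{ij} = γ if i = j + 3, and (T_n)_{ij} = 0 otherwise. Then the characteristic polynomial of T_n equals P_n, i.e., det(z·I_n − T_n) = P_n(z) for every positive integer n. -/
open Polynomial Matrix

noncomputable def fent (α β γ : ℝ) (i j : ℕ) : ℝ[X] :=
  if i = j then X else if j = i + 1 then 1 else if i = j + 1 then -C α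
  else if i = j + 2 then C β else if i = j + 3 then -C γ else 0

noncomputable def Amat (α β γ : ℝ) (n : ℕ) : Matrix (Fin n) (Fin n) ℝ[X] :=
  Matrix.of fun i j => fent α β γ (i : ℕ) (j : ℕ)

lemma fent_shift (α β γ : ℝ) (i j : ℕ) : fent α β γ (i+1) (j+1) = fent α β γ i j := by
  unfold fent; split_ifs <;> first | rfl | omega | exact ‹False›.elim

lemma fent_row0 (α β γ : ℝ) (j : ℕ) (hj : 1 ≤ j) : fent α β γ 0 (j+1) = 0 := by
  unfold fent; split_ifs <;> first | rfl | omega | exact ‹False›.elim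

lemma fent_01 (α β γ : ℝ) : fent α β γ 0 1 = 1 := by
  unfold fent; split_ifs <;> first | rfl | omega | exact ‹False›.elim

lemma fent_col0 (α β γ : ℝ) (i : ℕ) (hi : 4 ≤ i) : fent α β γ i 0 = 0 := by
  unfold fent; split_ifs <;> first | rfl | omega | exact ‹False›.elim

lemma detG (α β γ : ℝ) : ∀ (k m : ℕ), k ≤ m → ∀ B : Matrix (Fin m) (Fin m) ℝ[X],
    (∀ r c : Fin m, B r c
        = fent α β γ (if (r : ℕ) < k then (r : ℕ) else (r : ℕ) + 1) ((c : ℕ) + 1)) →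
    B.det = (Amat α β γ (m - k)).det := by
  intro k
  induction k with
  | zero =>
    intro m _ B hB
    have hBA : B = Amat α β γ m := by
      apply Matrix.ext; intro r c
      rw [hB, if_neg (Nat.not_lt_zero _)]
      exact fent_shift α β γ r c
    rw [hBA, Nat.sub_zero]
  | succ k ih =>
    intro m hkm B hB
    obtain ⟨m', rfl⟩ : ∃ m', m = m' + 1 := ⟨m - 1, by omega⟩
    rw [Matrix.det_succ_row_zero]
    rw [Finset.sum_eq_single_of_mem (0 : Fin (m' + 1)) (Finset.mem_univ _) (by
      intro j _ hj
      have hj1 : 1 ≤ (j : ℕ) := Nat.one_le_iff_ne_zero.mpr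
        (fun h => hj (Fin.ext h))
      have hB0 : B 0 j = 0 := by
        rw [hB]
        simp only [Fin.val_zero, if_pos (by omega : (0:ℕ) < k+1)]
        exact fent_row0 α β γ (j : ℕ) hj1
      rw [hB0]; ring)]
    have hB00 : B 0 0 = 1 := by
      rw [hB]; simp only [Fin.val_zero, if_pos (by omega : (0:ℕ) < k+1)]
      exact fent_01 α β γ
    rw [hB00, Fin.succAbove_zero]
    simp only [Fin.val_zero, pow_zero, one_mul, mul_one]
    have hred : (m' + 1) - (k + 1) = m' - k := by omega
    rw [hred]
    apply ih m' (by omega)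
    intro r c
    simp only [Matrix.submatrix_apply]
    rw [hB]
    simp only [Fin.val_succ]
    rw [show (if (r:ℕ)+1 < k+1 then (r:ℕ)+1 else (r:ℕ)+1+1)
        = (if (r:ℕ) < k then (r:ℕ) else (r:ℕ)+1) + 1 by split_ifs <;> omega]
    exact fent_shift α β γ _ _

lemma hcoe {m : ℕ} (i : Fin (m+1)) (r : Fin m) :
    ((i.succAbove r : Fin (m+1)) : ℕ) = if (r:ℕ) < (i:ℕ) then (r:ℕ) else (r:ℕ)+1 := by
  rw [Fin.succAbove]
  split_ifs with h1 h2 <;>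
    simp_all [Fin.lt_def, Fin.val_succ, Fin.coe_castSucc] <;> omega

lemma det_Amat_rec (α β γ : ℝ) (m : ℕ) (hm : 3 ≤ m) :
    (Amat α β γ (m+1)).det
      = X * (Amat α β γ m).det + C α * (Amat α β γ (m-1)).det
        + C β * (Amat α β γ (m-2)).det + C γ * (Amat α β γ (m-3)).det := by
  rw [Matrix.det_succ_column_zero]
  have hsub : ∀ i : Fin (m+1),
      ((Amat α β γ (m+1)).submatrix i.succAbove Fin.succ).det
        = (Amat α β γ (m - (i:ℕ))).det := by
    intro i
    apply detG α β γ (i : ℕ) m (Nat.lt_succ_iff.mp i.isLt)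
    intro r c
    simp only [Matrix.submatrix_apply]
    show fent α β γ ((i.succAbove r : Fin (m+1)) : ℕ) ((Fin.succ c : Fin (m+1)) : ℕ) = _
    rw [hcoe, Fin.val_succ]
  have hterm : ∀ i : Fin (m+1),
      (-1:ℝ[X]) ^ (i:ℕ) * (Amat α β γ (m+1)) i 0
          * ((Amat α β γ (m+1)).submatrix i.succAbove Fin.succ).det
        = (fun i : ℕ => (-1:ℝ[X]) ^ i * fent α β γ i 0 * (Amat α β γ (m - i)).det) (i : ℕ) := by
    intro i
    rw [hsub]
    rfl
  rw [Finset.sum_congr rfl (fun i _ => hterm i), Fin.sum_univ_eq_sum_range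
    (fun i : ℕ => (-1:ℝ[X]) ^ i * fent α β γ i 0 * (Amat α β γ (m - i)).det) (m+1)]
  rw [← Finset.sum_subset (Finset.range_subset_range.mpr (by omega : 4 ≤ m+1))
    (fun x _ hx => by
      rw [fent_col0 α β γ x (by simpa using hx)]; ring)]
  have e0 : fent α β γ 0 0 = X := by norm_num [fent]
  have e1 : fent α β γ 1 0 = -C α := by norm_num [fent]
  have e2 : fent α β γ 2 0 = C β := by norm_num [fent]
  have e3 : fent α β γ 3 0 = -C γ := by norm_num [fent]
  simp only [Finset.sum_range_succ, Finset.sum_range_zero, e0, e1, e2, e3, Nat.sub_zero]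
  ring

lemma det_Amat_zero (α β γ : ℝ) : (Amat α β γ 0).det = 1 := Matrix.det_fin_zero

lemma det_Amat_one (α β γ : ℝ) : (Amat α β γ 1).det = X := by
  rw [Matrix.det_fin_one]
  norm_num [Amat, fent]

lemma det_Amat_two (α β γ : ℝ) : (Amat α β γ 2).det = X ^ 2 + C α := by
  rw [Matrix.det_fin_two]
  norm_num [Amat, fent]
  ring

lemma det_Amat_three (α β γ : ℝ) :
    (Amat α β γ 3).det = X ^ 3 + C (2 * α) * X + C β := by
  rw [Matrix.det_fin_three]
  norm_num [Amat, fent]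
  rw [show (C 2 : ℝ[X]) = 2 by rw [show (2:ℝ) = 1 + 1 by norm_num, C_add, C_1]; norm_num]
  ring

/-- The characteristic polynomial `det(z·Iₙ − Tₙ)` of the `n×n` banded Toeplitz matrix
`Tₙ` (with `−1` on the first superdiagonal, `α`, `−β`, `γ` on the first, second and
third subdiagonals, zeros elsewhere) equals the polynomial `P_n` of the five-term
recurrence, for every positive integer `n`. -/
theorem charpoly_banded_toeplitz_eq_recurrence_polynomial
    (α β γ : ℝ) (hγ : γ ≠ 0) (P : ℕ → Polynomial ℝ)
    (h0 : P 0 = 1) (h1 : P 1 = X) (h2 : P 2 = X ^ 2 + C α)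
    (h3 : P 3 = X ^ 3 + C (2 * α) * X + C β)
    (hrec : ∀ n, 4 ≤ n →
      P n = X * P (n - 1) + C α * P (n - 2) + C β * P (n - 3) + C γ * P (n - 4)) :
    ∀ n : ℕ, 0 < n →
      Matrix.charpoly
        (Matrix.of fun i j : Fin n =>
          if (j : ℕ) = (i : ℕ) + 1 then (-1 : ℝ)
          else if (i : ℕ) = (j : ℕ) + 1 then α
          else if (i : ℕ) = (j : ℕ) + 2 then -β
          else if (i : ℕ) = (j : ℕ) + 3 then γ
          else 0) = P n := by
  have hD : ∀ n : ℕ, (Amat α β γ n).det = P n := by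
    intro n
    induction n using Nat.strong_induction_on with
    | _ n ih =>
      match n with
      | 0 => rw [det_Amat_zero, h0]
      | 1 => rw [det_Amat_one, h1]
      | 2 => rw [det_Amat_two, h2]
      | 3 => rw [det_Amat_three, h3]
      | (m+4) =>
        have h := det_Amat_rec α β γ (m+3) (by omega)
        rw [show m+3+1 = m+4 from rfl] at h
        rw [h, hrec (m+4) (by omega)]
        have e1 : m + 3 - 1 = m + 2 := by omega
        have e2 : m + 3 - 2 = m + 1 := by omega
        have e3 : m + 3 - 3 = m := by omega
        have f1 : m + 4 - 1 = m + 3 := by omega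
        have f2 : m + 4 - 2 = m + 2 := by omega
        have f3 : m + 4 - 3 = m + 1 := by omega
        have f4 : m + 4 - 4 = m := by omega
        rw [e1, e2, e3, f1, f2, f3, f4,
          ih (m+3) (by omega), ih (m+2) (by omega), ih (m+1) (by omega), ih m (by omega)]
  intro n _
  rw [Matrix.charpoly, ← hD n]
  congr 1
  apply Matrix.ext; intro i j
  rw [Matrix.charmatrix_apply]
  by_cases hij : i = j
  · subst hij
    simp only [Matrix.diagonal_apply_eq, Matrix.of_apply, Matrix.map_apply]
    rw [if_neg (by omega), if_neg (by omega), if_neg (by omega), if_neg (by omega)]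
    show X - C 0 = Amat α β γ n i i
    rw [map_zero, sub_zero]
    show (X : ℝ[X]) = fent α β γ i i
    unfold fent
    rw [if_pos rfl]
  · rw [Matrix.diagonal_apply_ne _ hij]
    show (0 : ℝ[X]) - C _ = fent α β γ (i : ℕ) (j : ℕ)
    have hvij : (i : ℕ) ≠ (j : ℕ) := fun h => hij (Fin.ext h)
    unfold fent
    rw [if_neg hvij]
    show 0 - C (Matrix.of _ i j) = _
    simp only [Matrix.of_apply]
    split_ifs <;> simp
end
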